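/- arXiv:1407.1392 — 3 statements merged into one kernel-verified Lean document; each statement's English description precedes it below -/
import Mathlib

section
/- Assume G is strongly distance-regular (equivalently, (1 + λ1)(1 + λ3) = (1 + λ2)(1 + λ4) = −b1). Then G is antipodal if and only if λ1 + λ3 = a1. -/
open Finset

attribute [local instance] Classical.propDecidable

/-- The distance-`d` graph of `G`: two distinct vertices are adjacent iff
they are at distance `d` in `G`. -/
def SimpleGraph.distGraph {V : Type*} (G : SimpleGraph V) (d : ℕ) : SimpleGraph V where
  Adj u v := u ≠ v ∧ G.dist u v = d
  symm := ⟨fun u v h => ⟨h.1.symm, by rw [SimpleGraph.dist_comm]; exact h.2⟩⟩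
  loopless := ⟨fun u h => h.1 rfl⟩

/-- `G` is strongly distance-regular (for diameter `d`) if its distance-`d` graph
is strongly regular. -/
def SimpleGraph.IsStronglyDRG {V : Type*} [Fintype V] (G : SimpleGraph V) (d : ℕ) : Prop :=
  ∃ n k ℓ μ, (G.distGraph d).IsSRGWith n k ℓ μ

/-- `G` is distance-regular with diameter `d` and intersection numbers `c i, a i, b i`. -/
def SimpleGraph.IsDistRegular {V : Type*} [Fintype V] (G : SimpleGraph V)
    (d : ℕ) (c a b : ℕ → ℕ) : Prop :=
  ∀ i ≤ d, ∀ u v : V, G.dist u v = i →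
    ((G.neighborFinset v).filter (fun w => G.dist u w = i - 1)).card = c i ∧
    ((G.neighborFinset v).filter (fun w => G.dist u w = i)).card = a i ∧
    ((G.neighborFinset v).filter (fun w => G.dist u w = i + 1)).card = b i

/-- The adjacency matrix of `G`, viewed as an endomorphism of `V → ℝ`. -/
noncomputable def SimpleGraph.adjEnd {V : Type*} [Fintype V] [DecidableEq V]
    (G : SimpleGraph V) : Module.End ℝ (V → ℝ) :=
  Matrix.toLin' (G.adjMatrix ℝ)

/-- The (real) adjacency spectrum of `G` consists exactly of the distinct eigenvalues
`lam 0 > lam 1 > ⋯ > lam d`, where `lam i` has multiplicity `m i`. -/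
def SimpleGraph.HasSpectrum {V : Type*} [Fintype V] [DecidableEq V] (G : SimpleGraph V)
    {d : ℕ} (lam : Fin (d + 1) → ℝ) (m : Fin (d + 1) → ℕ) : Prop :=
  StrictAnti lam ∧
  (∀ i, Module.End.HasEigenvalue G.adjEnd (lam i)) ∧
  (∀ μ : ℝ, Module.End.HasEigenvalue G.adjEnd μ → ∃ i, μ = lam i) ∧
  (∀ i, m i = Module.finrank ℝ (Module.End.eigenspace G.adjEnd (lam i)))

/-- `G` is antipodal (for diameter `d`): being equal or at distance `d`
is an equivalence relation on the vertices. -/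
def SimpleGraph.IsAntipodal {V : Type*} (G : SimpleGraph V) (d : ℕ) : Prop :=
  Equivalence (fun u v => u = v ∨ G.dist u v = d)

/-- `G` is `r`-antipodal (for diameter `d`): antipodal with all classes of size `r`. -/
def SimpleGraph.IsAntipodalWith {V : Type*} (G : SimpleGraph V) (d r : ℕ) : Prop :=
  G.IsAntipodal d ∧ ∀ u : V, Nat.card {v : V | u = v ∨ G.dist u v = d} = r

/-!
For an eigenvalue `θ ≠ k` with eigenvector `v`, the distance matrices satisfy `A_j v = P_j(θ) v`,
where `P_j` follows the three-term recurrence of the intersection numbers. The recurrence at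
`j = 4`, together with `∑ j, A_j v = J v = 0`, yields after eliminating `P₂, P₃` three polynomial
relations between `θ` and `x = P₄(θ)`, the eigenvalue of `G₄` on `v`. As `G₄` is strongly
regular, `x` takes at most two values on the four eigenvalues `λ₁ > ⋯ > λ₄`, and for fixed `x`
the relations are quadratic in `θ`; so the eigenvalues fall into two pairs. Comparing coefficients
inside the pairs gives `b₃ = a₄ + 1` and `(1 + θ)(1 + θ') = -b₁` on each pair, so each pair
straddles `-1`, which forces the pairing `{λ₁, λ₃}, {λ₂, λ₄}`. Vieta's formulas for these pairs
then show that `a₄ = 0` (implied by antipodality) gives `λ₁ + λ₃ = a₁`, and that conversely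
`λ₁ + λ₃ = a₁` forces `b₃ = 1` and `μ = 0` for `G₄`, i.e. antipodality.
-/

namespace SimpleGraph

variable {V : Type*} {G : SimpleGraph V}

lemma Connected.exists_adj_dist_eq (hconn : G.Connected) {u v : V} {i : ℕ}
    (h : G.dist u v = i + 1) : ∃ w, G.Adj w v ∧ G.dist u w = i := by
  obtain ⟨p, hp⟩ := hconn.exists_walk_length_eq_dist v u
  cases p with
  | nil => simp at h
  | cons hadj q =>
    rename_i w
    refine ⟨w, hadj.symm, le_antisymm ?_ ?_⟩
    · rw [dist_comm]
      have := dist_le q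
      rw [Walk.length_cons, dist_comm, h] at hp
      omega
    · have : G.dist u v ≤ G.dist u w + G.dist w v := hconn.dist_triangle
      rw [dist_eq_one_iff_adj.mpr hadj.symm] at this
      omega

lemma Connected.exists_dist_eq_of_le (hconn : G.Connected) {u v : V} {i : ℕ}
    (hi : i ≤ G.dist u v) : ∃ w, G.dist u w = i := by
  obtain ⟨j, hj⟩ := Nat.exists_eq_add_of_le hi
  induction j generalizing v with
  | zero => exact ⟨v, hj⟩
  | succ j ih =>
    obtain ⟨w, -, hw⟩ := hconn.exists_adj_dist_eq (hj.trans (Nat.add_succ i j))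
    exact ih (by omega) hw

lemma distGraph_adj_iff {d : ℕ} (hd : 0 < d) {u v : V} :
    (G.distGraph d).Adj u v ↔ G.dist u v = d := by
  refine ⟨And.right, fun h => ⟨?_, h⟩⟩
  rintro rfl
  simp at h
  omega

namespace IsDistRegular

variable [Fintype V] {d : ℕ} {c a b : ℕ → ℕ}

lemma b_zero (hdrg : G.IsDistRegular d c a b) {k : ℕ} (hreg : G.IsRegularOfDegree k) (u : V) :
    b 0 = k := by
  rw [← (hdrg 0 (Nat.zero_le d) u u dist_self).2.2, ← hreg u, ← card_neighborFinset_eq_degree]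
  congr 1
  exact filter_true_of_mem fun w hw => dist_eq_one_iff_adj.mpr ((mem_neighborFinset G u w).mp hw)

lemma c_one (hdrg : G.IsDistRegular d c a b) (hconn : G.Connected)
    (hdiam' : ∃ u v : V, G.dist u v = d) (hd : 0 < d) : c 1 = 1 := by
  obtain ⟨u, v, huv⟩ := hdiam'
  obtain ⟨w, hw⟩ := hconn.exists_dist_eq_of_le (huv ▸ hd : 1 ≤ G.dist u v)
  rw [← (hdrg 1 hd u w hw).1, card_eq_one]
  refine ⟨u, eq_singleton_iff_unique_mem.mpr ⟨?_, fun x hx => ?_⟩⟩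
  · simpa using (dist_eq_one_iff_adj.mp hw).symm
  · exact ((hconn.dist_eq_zero_iff).mp (mem_filter.mp hx).2).symm

lemma b_eq_zero (hdrg : G.IsDistRegular d c a b) (hdiam : ∀ u v : V, G.dist u v ≤ d) {u v : V}
    (h : G.dist u v = d) : b d = 0 := by
  rw [← (hdrg d le_rfl u v h).2.2, card_eq_zero, filter_eq_empty_iff]
  intro w _ hw
  have := hdiam u w
  omega

lemma add_add_eq (hdrg : G.IsDistRegular d c a b) (hconn : G.Connected) {k : ℕ}
    (hreg : G.IsRegularOfDegree k) (hdiam' : ∃ u v : V, G.dist u v = d) {i : ℕ} (hi : 0 < i)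
    (hid : i ≤ d) : c i + a i + b i = k := by
  obtain ⟨u, v, huv⟩ := hdiam'
  obtain ⟨w, hw⟩ := hconn.exists_dist_eq_of_le (huv ▸ hid : i ≤ G.dist u v)
  obtain ⟨hc, ha, hb⟩ := hdrg i hid u w hw
  rw [← hc, ← ha, ← hb, ← hreg w, ← card_neighborFinset_eq_degree, card_filter, card_filter,
    card_filter, ← sum_add_distrib, ← sum_add_distrib, card_eq_sum_ones]
  refine sum_congr rfl fun x hx => ?_
  rcases ((mem_neighborFinset G w x).mp hx).diff_dist_adj (u := u) with h | h | h <;>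
    split_ifs <;> omega

lemma pos_of_dist_eq_succ (hdrg : G.IsDistRegular d c a b) (hconn : G.Connected) {i : ℕ}
    (hid : i + 1 ≤ d) {u v : V} (h : G.dist u v = i + 1) : 0 < c (i + 1) ∧ 0 < b i := by
  obtain ⟨w, hwv, hw⟩ := hconn.exists_adj_dist_eq h
  constructor
  · rw [← (hdrg (i + 1) hid u v h).1]
    exact card_pos.mpr ⟨w, mem_filter.mpr ⟨(mem_neighborFinset G v w).mpr hwv.symm, hw⟩⟩
  · rw [← (hdrg i (by omega) u w hw).2.2]
    exact card_pos.mpr ⟨v, mem_filter.mpr ⟨(mem_neighborFinset G w v).mpr hwv, h⟩⟩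

lemma c_pos (hdrg : G.IsDistRegular d c a b) (hconn : G.Connected)
    (hdiam' : ∃ u v : V, G.dist u v = d) {i : ℕ} (hi : 0 < i) (hid : i ≤ d) : 0 < c i := by
  obtain ⟨u, v, huv⟩ := hdiam'
  obtain ⟨w, hw⟩ := hconn.exists_dist_eq_of_le (huv ▸ hid : i ≤ G.dist u v)
  obtain ⟨j, rfl⟩ := Nat.exists_eq_add_of_lt hi
  exact (hdrg.pos_of_dist_eq_succ hconn hid hw).1

lemma b_pos (hdrg : G.IsDistRegular d c a b) (hconn : G.Connected)
    (hdiam' : ∃ u v : V, G.dist u v = d) {i : ℕ} (hid : i < d) : 0 < b i := by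
  obtain ⟨u, v, huv⟩ := hdiam'
  obtain ⟨w, hw⟩ := hconn.exists_dist_eq_of_le (huv ▸ hid : i + 1 ≤ G.dist u v)
  exact (hdrg.pos_of_dist_eq_succ hconn hid hw).2

lemma a_eq_zero_of_isAntipodal (hdrg : G.IsDistRegular d c a b) (hant : G.IsAntipodal d)
    (hd : 1 < d) {u v : V} (h : G.dist u v = d) : a d = 0 := by
  rw [← (hdrg d le_rfl u v h).2.1, card_eq_zero, filter_eq_empty_iff]
  intro w hw huw
  have hadj := (mem_neighborFinset G v w).mp hw
  rcases hant.trans (Or.inr (dist_comm.trans h)) (Or.inr huw) with rfl | hvw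
  · exact hadj.ne rfl
  · rw [dist_eq_one_iff_adj.mpr hadj] at hvw
    omega

end IsDistRegular

lemma isAntipodal_of_isSRGWith [Fintype V] {d n k ℓ : ℕ}
    (hd : 0 < d) (hsrg : (G.distGraph d).IsSRGWith n k ℓ 0) : G.IsAntipodal d := by
  refine ⟨fun _ => Or.inl rfl, ?_, ?_⟩
  · rintro u v (rfl | h)
    · exact Or.inl rfl
    · exact Or.inr (dist_comm.trans h)
  · rintro u v w (rfl | huv) (rfl | hvw)
    · exact Or.inl rfl
    · exact Or.inr hvw
    · exact Or.inr huv
    · by_contra! hne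
      have hcard := hsrg.of_not_adj hne.1 fun hadj => hne.2 ((distGraph_adj_iff hd).mp hadj)
      refine (Fintype.card_eq_zero_iff.mp hcard).false ⟨v, ?_, ?_⟩
      · exact (distGraph_adj_iff hd).mpr huv
      · exact (distGraph_adj_iff hd).mpr (dist_comm.trans hvw)

open Matrix

lemma exists_mulVec_eq_smul_of_hasEigenvalue [Fintype V] [DecidableEq V] {θ : ℝ}
    (h : Module.End.HasEigenvalue G.adjEnd θ) : ∃ v ≠ 0, G.adjMatrix ℝ *ᵥ v = θ • v := by
  obtain ⟨v, hv⟩ := h.exists_hasEigenvector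
  refine ⟨v, hv.2, ?_⟩
  simpa [adjEnd, toLin'_apply] using hv.apply_eq_smul

lemma sum_eq_zero_of_mulVec_eq_smul [Fintype V] {k : ℕ} (hreg : G.IsRegularOfDegree k)
    {v : V → ℝ} {θ : ℝ} (hv : G.adjMatrix ℝ *ᵥ v = θ • v) (hθ : θ ≠ k) : ∑ u, v u = 0 := by
  have h1 : (1 : V → ℝ) ᵥ* G.adjMatrix ℝ = (k : ℝ) • 1 := by
    ext u
    simp [hreg u]
  have h2 := dotProduct_mulVec 1 (G.adjMatrix ℝ) v
  rw [hv, h1, dotProduct_smul, smul_dotProduct, one_dotProduct] at h2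
  have h3 : (θ - k) * ∑ u, v u = 0 := by
    simp only [smul_eq_mul] at h2
    linarith
  exact (mul_eq_zero.mp h3).resolve_left (sub_ne_zero.mpr hθ)

lemma IsSRGWith.sq_eq_of_mulVec_eq_smul [Fintype V] [DecidableEq V] {H : SimpleGraph V}
    [DecidableRel H.Adj] {n k ℓ μ : ℕ} (h : H.IsSRGWith n k ℓ μ) {v : V → ℝ} (hv0 : v ≠ 0) (hsum : ∑ u, v u = 0)
    {x : ℝ} (hv : H.adjMatrix ℝ *ᵥ v = x • v) : x ^ 2 = (ℓ - μ) * x + (k - μ) := by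
  have hcompl : Hᶜ.adjMatrix ℝ *ᵥ v = (-1 - x) • v := by
    have hJ : (of 1 : Matrix V V ℝ) *ᵥ v = 0 := by
      ext u
      simp [mulVec, dotProduct, hsum]
    rw [← compl_adjMatrix_eq_adjMatrix_compl, eq_sub_of_add_eq'
      (one_add_adjMatrix_add_compl_adjMatrix_eq_of_one (G := H) (α := ℝ)), sub_mulVec, hJ,
      add_mulVec, one_mulVec, hv]
    module
  have happ := congrArg (· *ᵥ v) h.matrix_eq
  simp only [sq, ← mulVec_mulVec, hv, mulVec_smul, add_mulVec, smul_mulVec, one_mulVec,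
    hcompl] at happ
  refine smul_left_injective ℝ hv0 ?_
  simp only
  rw [sq, mul_smul, happ]
  module

noncomputable def distMatrix (G : SimpleGraph V) (j : ℕ) : Matrix V V ℝ :=
  of fun u w => if G.dist u w = j then 1 else 0

lemma distMatrix_zero [DecidableEq V] (hconn : G.Connected) : G.distMatrix 0 = 1 := by
  ext u w
  simp [distMatrix, one_apply, hconn.dist_eq_zero_iff]

lemma distMatrix_one [DecidableEq V] : G.distMatrix 1 = G.adjMatrix ℝ := by
  ext u w
  simp [distMatrix]

lemma adjMatrix_distGraph [DecidableEq V] {d : ℕ} (hd : 0 < d) :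
    (G.distGraph d).adjMatrix ℝ = G.distMatrix d := by
  ext u w
  simp [distMatrix, distGraph_adj_iff hd]

lemma distMatrix_eq_zero {d : ℕ} (hdiam : ∀ u v : V, G.dist u v ≤ d) {j : ℕ} (hj : d < j) :
    G.distMatrix j = 0 := by
  ext u w
  have := hdiam u w
  simp [distMatrix]
  omega

lemma sum_distMatrix [Fintype V] {d : ℕ} (hdiam : ∀ u v : V, G.dist u v ≤ d) :
    ∑ j ∈ range (d + 1), G.distMatrix j = of fun _ _ => 1 := by
  ext u w
  simp only [Matrix.sum_apply, distMatrix, of_apply]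
  rw [sum_ite_eq (range (d + 1)) (G.dist u w) (fun _ => (1 : ℝ)),
    if_pos (mem_range.mpr (Nat.lt_succ_of_le (hdiam u w)))]

end SimpleGraph

/-- `distPoly a b c θ j = p_j(θ)` for the polynomials `p_j` with `A_j = p_j(A)`, where `A_j` is
the distance-`j` matrix of a distance-regular graph with intersection numbers `a, b, c`. -/
noncomputable def distPoly (a b c : ℕ → ℕ) (θ : ℝ) : ℕ → ℝ
  | 0 => 1
  | 1 => θ
  | j + 2 => ((θ - a (j + 1)) * distPoly a b c θ (j + 1) - b j * distPoly a b c θ j) / c (j + 2)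

lemma mul_distPoly_add_two {a b c : ℕ → ℕ} {θ : ℝ} {j : ℕ} (hc : c (j + 2) ≠ 0) :
    c (j + 2) * distPoly a b c θ (j + 2) =
      (θ - a (j + 1)) * distPoly a b c θ (j + 1) - b j * distPoly a b c θ j := by
  rw [distPoly, mul_div_cancel₀ _ (by exact_mod_cast hc)]

lemma prod_c_mul_distPoly_eq_prod_b {a b c : ℕ → ℕ} {d k : ℕ} (hb0 : b 0 = k) (hc1 : c 1 = 1)
    (hc : ∀ i, 0 < i → i ≤ d → 0 < c i) (hk : ∀ i, 0 < i → i < d → c i + a i + b i = k) :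
    ∀ j ≤ d, (∏ i ∈ range j, (c (i + 1) : ℝ)) * distPoly a b c k j = ∏ i ∈ range j, (b i : ℝ) := by
  have hstep : ∀ j, j + 1 ≤ d →
      (c (j + 1) : ℝ) * distPoly a b c k (j + 1) = b j * distPoly a b c k j := by
    intro j hj
    induction j with
    | zero => simp [distPoly, hb0, hc1]
    | succ j ih =>
      have hk' : (c (j + 1) + a (j + 1) + b (j + 1) : ℝ) = k := by
        exact_mod_cast hk (j + 1) (by omega) (by omega)
      rw [mul_distPoly_add_two (hc (j + 2) (by omega) hj).ne', ← ih (by omega), ← hk']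
      ring
  intro j hj
  induction j with
  | zero => simp [distPoly]
  | succ j ih =>
    rw [prod_range_succ, prod_range_succ, mul_assoc, hstep j hj, ← ih (by omega)]
    ring

namespace SimpleGraph

open Matrix

variable {V : Type*} [Fintype V] {G : SimpleGraph V} {d : ℕ} {c a b : ℕ → ℕ}

namespace IsDistRegular

lemma card_filter_adj_dist_eq (hdrg : G.IsDistRegular d c a b)
    (hdiam : ∀ u v : V, G.dist u v ≤ d) {j : ℕ} (hj : 0 < j) (hjd : j ≤ d) (u z : V) :
    #{w ∈ G.neighborFinset u | G.dist w z = j} =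
      (if G.dist u z = j - 1 then b (j - 1) else 0) + (if G.dist u z = j then a j else 0) +
        (if G.dist u z = j + 1 then c (j + 1) else 0) := by
  have hfilter : {w ∈ G.neighborFinset u | G.dist w z = j} =
      {w ∈ G.neighborFinset u | G.dist z w = j} :=
    filter_congr fun w _ => by rw [dist_comm]
  rw [hfilter]
  by_cases h1 : G.dist u z = j - 1
  · rw [if_pos h1, if_neg (by omega), if_neg (by omega),
      ← (hdrg (j - 1) (by omega) z u (dist_comm.trans h1)).2.2, Nat.sub_add_cancel hj]
    simp
  by_cases h2 : G.dist u z = j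
  · rw [if_neg h1, if_pos h2, if_neg (by omega), ← (hdrg j hjd z u (dist_comm.trans h2)).2.1]
    simp
  by_cases h3 : G.dist u z = j + 1
  · rw [if_neg h1, if_neg h2, if_pos h3,
      ← (hdrg (j + 1) (h3 ▸ hdiam u z) z u (dist_comm.trans h3)).1, Nat.add_sub_cancel]
    simp
  rw [if_neg h1, if_neg h2, if_neg h3, card_eq_zero, filter_eq_empty_iff]
  intro w hw hzw
  have := dist_comm (G := G) (u := u) (v := z)
  rcases ((mem_neighborFinset G u w).mp hw).diff_dist_adj (u := z) with h | h | h <;> omega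

lemma adjMatrix_mul_distMatrix (hdrg : G.IsDistRegular d c a b)
    (hdiam : ∀ u v : V, G.dist u v ≤ d) {j : ℕ} (hj : 0 < j) (hjd : j ≤ d) :
    G.adjMatrix ℝ * G.distMatrix j = (b (j - 1) : ℝ) • G.distMatrix (j - 1) +
      (a j : ℝ) • G.distMatrix j + (c (j + 1) : ℝ) • G.distMatrix (j + 1) := by
  ext u z
  simp only [adjMatrix_mul_apply, distMatrix, of_apply, Matrix.add_apply, Matrix.smul_apply,
    smul_eq_mul, sum_boole, hdrg.card_filter_adj_dist_eq hdiam hj hjd u z]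
  split_ifs <;> first | omega | simp

variable {θ : ℝ} {v : V → ℝ}

lemma distMatrix_mulVec [DecidableEq V] (hdrg : G.IsDistRegular d c a b) (hconn : G.Connected)
    (hdiam : ∀ u v : V, G.dist u v ≤ d) (hc : ∀ i, 0 < i → i ≤ d → 0 < c i)
    (hv : G.adjMatrix ℝ *ᵥ v = θ • v) :
    ∀ j ≤ d, G.distMatrix j *ᵥ v = distPoly a b c θ j • v := by
  intro j hj
  induction j using Nat.strong_induction_on with
  | _ j ih =>
    match j, hj, ih with
    | 0, _, _ => rw [distMatrix_zero hconn, one_mulVec, distPoly, one_smul]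
    | 1, _, _ => rw [distMatrix_one, hv, distPoly]
    | j + 2, hj, ih =>
      have hstep := congrArg (· *ᵥ v)
        (hdrg.adjMatrix_mul_distMatrix hdiam (j := j + 1) (by omega) (by omega))
      simp only [← mulVec_mulVec, add_mulVec, smul_mulVec, mulVec_smul, hv, Nat.add_sub_cancel,
        ih (j + 1) (by omega) (by omega), ih j (by omega) (by omega)] at hstep
      have hc' : (c (j + 2) : ℝ) ≠ 0 := by exact_mod_cast (hc (j + 2) (by omega) hj).ne'
      have hX : ((θ - a (j + 1)) * distPoly a b c θ (j + 1) - b j * distPoly a b c θ j) • v =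
          (c (j + 2) : ℝ) • (G.distMatrix (j + 2) *ᵥ v) := by
        linear_combination (norm := module) hstep
      rw [distPoly, div_eq_inv_mul, mul_smul, hX, smul_smul, inv_mul_cancel₀ hc', one_smul]

lemma distPoly_top [DecidableEq V] (hdrg : G.IsDistRegular d c a b) (hconn : G.Connected)
    (hdiam : ∀ u v : V, G.dist u v ≤ d) (hc : ∀ i, 0 < i → i ≤ d → 0 < c i) (hd : 0 < d)
    (hv0 : v ≠ 0) (hv : G.adjMatrix ℝ *ᵥ v = θ • v) :
    θ * distPoly a b c θ d = b (d - 1) * distPoly a b c θ (d - 1) + a d * distPoly a b c θ d := by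
  have hstep := congrArg (· *ᵥ v) (hdrg.adjMatrix_mul_distMatrix hdiam hd le_rfl)
  simp only [← mulVec_mulVec, add_mulVec, smul_mulVec, mulVec_smul, hv,
    distMatrix_eq_zero hdiam (Nat.lt_succ_self d), smul_zero, add_zero,
    hdrg.distMatrix_mulVec hconn hdiam hc hv d le_rfl,
    hdrg.distMatrix_mulVec hconn hdiam hc hv (d - 1) (Nat.sub_le d 1)] at hstep
  refine smul_left_injective ℝ hv0 ?_
  simp only
  rw [mul_comm, mul_smul, hstep, add_smul, mul_smul, mul_smul]

lemma sum_distPoly [DecidableEq V] (hdrg : G.IsDistRegular d c a b) (hconn : G.Connected)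
    (hdiam : ∀ u v : V, G.dist u v ≤ d) (hc : ∀ i, 0 < i → i ≤ d → 0 < c i) {k : ℕ}
    (hreg : G.IsRegularOfDegree k) (hv0 : v ≠ 0) (hv : G.adjMatrix ℝ *ᵥ v = θ • v)
    (hθ : θ ≠ k) : ∑ j ∈ range (d + 1), distPoly a b c θ j = 0 := by
  have hJ := congrArg (· *ᵥ v) (sum_distMatrix hdiam)
  simp only [sum_mulVec] at hJ
  rw [sum_congr rfl fun j hj => hdrg.distMatrix_mulVec hconn hdiam hc hv j
    (Nat.lt_succ_iff.mp (mem_range.mp hj)), ← sum_smul] at hJ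
  refine smul_left_injective ℝ hv0 ((hJ.trans ?_).trans (zero_smul ℝ v).symm)
  ext u
  simp [mulVec, dotProduct, sum_eq_zero_of_mulVec_eq_smul hreg hv hθ]

end IsDistRegular

end SimpleGraph

lemma eq_zero_and_eq_zero_of_linear {B C x y : ℝ} (hx : B * x + C = 0) (hy : B * y + C = 0)
    (hxy : x ≠ y) : B = 0 ∧ C = 0 := by
  have hB : B = 0 := by
    have h : (x - y) * B = 0 := by linear_combination hx - hy
    exact (mul_eq_zero.mp h).resolve_left (sub_ne_zero.mpr hxy)
  exact ⟨hB, by linear_combination hx - x * hB⟩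

lemma vieta_of_roots {A B C x y : ℝ} (hx : A * x ^ 2 + B * x + C = 0)
    (hy : A * y ^ 2 + B * y + C = 0) (hxy : x ≠ y) : A * (x + y) + B = 0 ∧ A * (x * y) - C = 0 := by
  have h1 : A * (x + y) + B = 0 := by
    have h : (x - y) * (A * (x + y) + B) = 0 := by linear_combination hx - hy
    exact (mul_eq_zero.mp h).resolve_left (sub_ne_zero.mpr hxy)
  exact ⟨h1, by linear_combination x * h1 - hx⟩

lemma eq_or_eq_or_eq_of_roots {A B C x y z : ℝ} (hA : A ≠ 0) (hx : A * x ^ 2 + B * x + C = 0)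
    (hy : A * y ^ 2 + B * y + C = 0) (hz : A * z ^ 2 + B * z + C = 0) :
    x = y ∨ x = z ∨ y = z := by
  by_contra! h
  have hxy := (vieta_of_roots hx hy h.1).1
  have hxz := (vieta_of_roots hx hz h.2.1).1
  have : A * (y - z) = 0 := by linear_combination hxy - hxz
  exact h.2.2 (sub_eq_zero.mp ((mul_eq_zero.mp this).resolve_left hA))

lemma pairing_of_two_values {α : Type*} {x₁ x₂ x₃ x₄ : α}
    (h₁₂₃ : x₁ = x₂ ∨ x₁ = x₃ ∨ x₂ = x₃) (h₁₂₄ : x₁ = x₂ ∨ x₁ = x₄ ∨ x₂ = x₄)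
    (h₁₃₄ : x₁ = x₃ ∨ x₁ = x₄ ∨ x₃ = x₄) (h₂₃₄ : x₂ = x₃ ∨ x₂ = x₄ ∨ x₃ = x₄)
    (n₁₂₃ : ¬(x₁ = x₂ ∧ x₁ = x₃)) (n₁₂₄ : ¬(x₁ = x₂ ∧ x₁ = x₄))
    (n₁₃₄ : ¬(x₁ = x₃ ∧ x₁ = x₄)) (n₂₃₄ : ¬(x₂ = x₃ ∧ x₂ = x₄)) :
    (x₁ = x₂ ∧ x₃ = x₄ ∧ x₁ ≠ x₃) ∨ (x₁ = x₃ ∧ x₂ = x₄ ∧ x₁ ≠ x₂) ∨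
      (x₁ = x₄ ∧ x₂ = x₃ ∧ x₁ ≠ x₂) := by
  grind

structure IsDiam4Array (k : ℝ) (a b c : ℕ → ℝ) : Prop where
  b_zero : b 0 = k
  c_one : c 1 = 1
  b_one_pos : 0 < b 1
  b_two_pos : 0 < b 2
  b_three_pos : 0 < b 3
  c_two_pos : 0 < c 2
  c_three_pos : 0 < c 3
  k_pos : 0 < k
  add_add_one : c 1 + a 1 + b 1 = k
  add_add_three : c 3 + a 3 + b 3 = k
  add_four : c 4 + a 4 = k

/-- The relations between an eigenvalue `θ ≠ k` of a distance-regular graph of diameter 4 and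
`x = P₄(θ)`: the recurrences for `P₂, P₃, P₄` after eliminating `P₃ = (θ - a₄) x / b₃` and
`P₂ = -1 - θ - P₃ - x`. -/
structure SpectralRel (k : ℝ) (a b c : ℕ → ℝ) (θ x : ℝ) : Prop where
  recur_two : b 3 * (θ ^ 2 - a 1 * θ - k) + c 2 * b 3 * (1 + θ) + c 2 * x * (b 3 + θ - a 4) = 0
  recur_three : c 3 * (θ - a 4) * x + (θ - a 2) * (b 3 * (1 + θ + x) + (θ - a 4) * x) +
    b 1 * b 3 * θ = 0
  recur_four : (θ - a 3) * (θ - a 4) * x + b 2 * b 3 * (1 + θ + x) + b 2 * (θ - a 4) * x -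
    c 4 * b 3 * x = 0

/-- The conditions on a value `x` of `P₄` shared by two distinct eigenvalues, see
`SpectralRel.isSharedValue`. -/
structure IsSharedValue (k : ℝ) (a b c : ℕ → ℝ) (x : ℝ) : Prop where
  recur_three_lin : -c 2 * x ^ 2 + b 3 * (c 3 - 2 * c 2 + b 3 - a 4 - a 2 + a 1) * x +
    b 3 ^ 2 * (1 - c 2 + b 1 - a 2 + a 1) = 0
  recur_three_const : c 2 * (a 4 - b 3) * x ^ 2 +
    b 3 * (k - c 2 - b 3 * c 2 - a 4 * c 3 + a 4 * c 2 - a 2 * b 3 + a 2 * a 4) * x +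
    b 3 ^ 2 * (k - c 2 - a 2) = 0
  recur_four_lin : -c 2 * x ^ 2 + b 3 * (b 2 - c 2 - a 4 - a 3 + a 1) * x + b 2 * b 3 ^ 2 = 0
  recur_four_const : c 2 * (a 4 - b 3) * x ^ 2 +
    b 3 * (k - c 2 - b 3 * c 4 + b 2 * b 3 - a 4 * b 2 + a 3 * a 4) * x + b 2 * b 3 ^ 2 = 0

namespace SpectralRel

variable {k : ℝ} {a b c : ℕ → ℝ} {θ x : ℝ}

lemma of_recurrence {p₂ p₃ : ℝ} (h₂ : c 2 * p₂ = θ ^ 2 - a 1 * θ - k)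
    (h₃ : c 3 * p₃ = (θ - a 2) * p₂ - b 1 * θ) (h₄ : c 4 * x = (θ - a 3) * p₃ - b 2 * p₂)
    (hsum : 1 + θ + p₂ + p₃ + x = 0) (htop : θ * x = b 3 * p₃ + a 4 * x) :
    SpectralRel k a b c θ x where
  recur_two := by linear_combination -b 3 * h₂ + c 2 * b 3 * hsum + c 2 * htop
  recur_three := by
    linear_combination b 3 * h₃ + (c 3 + θ - a 2) * htop + (θ - a 2) * b 3 * hsum
  recur_four := by
    linear_combination -b 3 * h₄ + (θ - a 3 + b 2) * htop + b 2 * b 3 * hsum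

variable {α β γ δ y : ℝ}

lemma vieta (hα : SpectralRel k a b c α x) (hβ : SpectralRel k a b c β x) (hαβ : α ≠ β) :
    b 3 * (α + β) + (c 2 * x + c 2 * b 3 - a 1 * b 3) = 0 ∧
      b 3 * (α * β) - (b 3 * c 2 + b 3 * c 2 * x - a 4 * c 2 * x - k * b 3) = 0 :=
  vieta_of_roots (by linear_combination hα.recur_two) (by linear_combination hβ.recur_two) hαβ

lemma eq_or_eq_or_eq (hb : b 3 ≠ 0) (hα : SpectralRel k a b c α x)
    (hβ : SpectralRel k a b c β x) (hγ : SpectralRel k a b c γ x) : α = β ∨ α = γ ∨ β = γ :=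
  eq_or_eq_or_eq_of_roots (B := c 2 * x + c 2 * b 3 - a 1 * b 3)
    (C := b 3 * c 2 + b 3 * c 2 * x - a 4 * c 2 * x - k * b 3) hb
    (by linear_combination hα.recur_two) (by linear_combination hβ.recur_two)
    (by linear_combination hγ.recur_two)

/-- Both roots of the quadratic `recur_two` in `θ` are roots of `recur_three` and `recur_four`,
which are quadratics in `θ` too; comparing coefficients leaves four equations in `x` alone. -/
lemma isSharedValue (hα : SpectralRel k a b c α x) (hβ : SpectralRel k a b c β x)
    (hαβ : α ≠ β) : IsSharedValue k a b c x := by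
  have hthree : ∀ {θ}, SpectralRel k a b c θ x →
      (-c 2 * x ^ 2 + b 3 * (c 3 - 2 * c 2 + b 3 - a 4 - a 2 + a 1) * x +
        b 3 ^ 2 * (1 - c 2 + b 1 - a 2 + a 1)) * θ +
      (c 2 * (a 4 - b 3) * x ^ 2 +
        b 3 * (k - c 2 - b 3 * c 2 - a 4 * c 3 + a 4 * c 2 - a 2 * b 3 + a 2 * a 4) * x +
        b 3 ^ 2 * (k - c 2 - a 2)) = 0 := fun h => by
    linear_combination b 3 * h.recur_three - (b 3 + x) * h.recur_two
  have hfour : ∀ {θ}, SpectralRel k a b c θ x →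
      (-c 2 * x ^ 2 + b 3 * (b 2 - c 2 - a 4 - a 3 + a 1) * x + b 2 * b 3 ^ 2) * θ +
      (c 2 * (a 4 - b 3) * x ^ 2 +
        b 3 * (k - c 2 - b 3 * c 4 + b 2 * b 3 - a 4 * b 2 + a 3 * a 4) * x + b 2 * b 3 ^ 2) = 0 :=
    fun h => by linear_combination b 3 * h.recur_four - x * h.recur_two
  obtain ⟨h₁, h₂⟩ := eq_zero_and_eq_zero_of_linear (hthree hα) (hthree hβ) hαβ
  obtain ⟨h₃, h₄⟩ := eq_zero_and_eq_zero_of_linear (hfour hα) (hfour hβ) hαβ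
  exact ⟨h₁, h₂, h₃, h₄⟩

end SpectralRel

namespace IsSharedValue

variable {k : ℝ} {a b c : ℕ → ℝ} {x y : ℝ}

lemma b_three_eq (hp : IsDiam4Array k a b c) (hx : IsSharedValue k a b c x)
    (hy : IsSharedValue k a b c y) (hxy : x ≠ y) : b 3 = a 4 + 1 := by
  have e₁ := (vieta_of_roots hx.recur_four_lin hy.recur_four_lin hxy).2
  have e₂ := (vieta_of_roots hx.recur_four_const hy.recur_four_const hxy).2
  have h : b 2 * b 3 ^ 2 * (a 4 - b 3 + 1) = 0 := by linear_combination (b 3 - a 4) * e₁ - e₂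
  have : b 2 * b 3 ^ 2 ≠ 0 := by have := hp.b_two_pos; have := hp.b_three_pos; positivity
  linarith [(mul_eq_zero.mp h).resolve_left this]

lemma c_three_mul_b_three (hp : IsDiam4Array k a b c) (hx : IsSharedValue k a b c x)
    (hy : IsSharedValue k a b c y) (hxy : x ≠ y) : c 3 * b 3 = k - 1 - a 1 := by
  have e₁ := (vieta_of_roots hx.recur_three_lin hy.recur_three_lin hxy).1
  have e₂ := (vieta_of_roots hx.recur_three_const hy.recur_three_const hxy).1
  have h : b 3 * ((k - 1 - a 1) - c 3 * b 3) = 0 := by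
    linear_combination -e₁ + e₂ + (c 2 * (x + y) + b 3 - b 3 * c 3 + b 3 * c 2 + a 2 * b 3) *
      hx.b_three_eq hp hy hxy
  linarith [(mul_eq_zero.mp h).resolve_left hp.b_three_pos.ne']

lemma mul_eq (hx : IsSharedValue k a b c x) (hy : IsSharedValue k a b c y) (hxy : x ≠ y) :
    c 2 * (x * y) = -(b 2 * b 3 ^ 2) := by
  linear_combination -(vieta_of_roots hx.recur_four_lin hy.recur_four_lin hxy).2

lemma add_eq (hx : IsSharedValue k a b c x) (hy : IsSharedValue k a b c y) (hxy : x ≠ y) :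
    c 2 * (x + y) = b 3 * (a 1 + b 2 - a 3 - a 4 - c 2) := by
  linear_combination -(vieta_of_roots hx.recur_four_lin hy.recur_four_lin hxy).1

end IsSharedValue

namespace SpectralRel

variable {k : ℝ} {a b c : ℕ → ℝ} {α β γ δ x y : ℝ}

lemma neg_one_mem_Ioo (hp : IsDiam4Array k a b c) (hb : b 3 = a 4 + 1)
    (hα : SpectralRel k a b c α x) (hβ : SpectralRel k a b c β x) (hβα : β < α) :
    (-1 : ℝ) ∈ Set.Ioo β α := by
  obtain ⟨hsum, hprod⟩ := hα.vieta hβ hβα.ne'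
  have h : b 3 * ((1 + α) * (1 + β)) = -(b 3 * b 1) := by
    linear_combination hsum + hprod + c 2 * x * hb + b 3 * hp.add_add_one - b 3 * hp.c_one
  have hb₃ := hp.b_three_pos
  have hb₁ := hp.b_one_pos
  have hneg : (1 + α) * (1 + β) < 0 := by nlinarith
  constructor <;> nlinarith

/-- The quadratic `recur_two` of the pair `α, β` evaluated at an eigenvalue `γ` with value `y`. -/
lemma eval_pair_quadratic (hb : b 3 = a 4 + 1) (hα : SpectralRel k a b c α x)
    (hβ : SpectralRel k a b c β x) (hαβ : α ≠ β) (hγ : SpectralRel k a b c γ y) :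
    b 3 * ((γ - α) * (γ - β)) = c 2 * ((x - y) * (γ + 1)) := by
  obtain ⟨hsum, hprod⟩ := hα.vieta hβ hαβ
  linear_combination -γ * hsum + hprod + hγ.recur_two + c 2 * (x - y) * hb

lemma value_lt_of_lt (hp : IsDiam4Array k a b c) (hb : b 3 = a 4 + 1)
    (hα : SpectralRel k a b c α x) (hβ : SpectralRel k a b c β x) (hγ : SpectralRel k a b c γ y)
    (hβα : β < α) (hαγ : α < γ) : y < x := by
  have h := eval_pair_quadratic hb hα hβ hβα.ne' hγ
  have hα₁ := (neg_one_mem_Ioo hp hb hα hβ hβα).2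
  have hb₃ := hp.b_three_pos
  have hc₂ := hp.c_two_pos
  have hpos : 0 < c 2 * ((x - y) * (γ + 1)) := h ▸ by
    have : 0 < (γ - α) * (γ - β) := mul_pos (by linarith) (by linarith)
    positivity
  have := pos_of_mul_pos_left (pos_of_mul_pos_right hpos hc₂.le) (by linarith)
  linarith

lemma value_lt_of_mem_Ioo (hp : IsDiam4Array k a b c) (hb : b 3 = a 4 + 1)
    (hα : SpectralRel k a b c α x) (hβ : SpectralRel k a b c β x) (hγ : SpectralRel k a b c γ y)
    (hβγ : β < γ) (hγα : γ < α) (hγ₁ : γ < -1) : y < x := by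
  have h := eval_pair_quadratic hb hα hβ (hβγ.trans hγα).ne' hγ
  have hb₃ := hp.b_three_pos
  have hc₂ := hp.c_two_pos
  have hneg : c 2 * ((x - y) * (γ + 1)) < 0 := h ▸
    mul_neg_of_pos_of_neg hb₃ (mul_neg_of_neg_of_pos (by linarith) (by linarith))
  have := pos_of_mul_neg_left (neg_of_mul_neg_right hneg hc₂.le) (by linarith)
  linarith

lemma pairing_one_three (hp : IsDiam4Array k a b c) {l₁ l₂ l₃ l₄ x₁ x₂ x₃ x₄ p q : ℝ}
    (h₁ : SpectralRel k a b c l₁ x₁) (h₂ : SpectralRel k a b c l₂ x₂)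
    (h₃ : SpectralRel k a b c l₃ x₃) (h₄ : SpectralRel k a b c l₄ x₄)
    (h₁₂ : l₂ < l₁) (h₂₃ : l₃ < l₂) (h₃₄ : l₄ < l₃)
    (hq₁ : x₁ ^ 2 = p * x₁ + q) (hq₂ : x₂ ^ 2 = p * x₂ + q) (hq₃ : x₃ ^ 2 = p * x₃ + q)
    (hq₄ : x₄ ^ 2 = p * x₄ + q) :
    x₁ = x₃ ∧ x₂ = x₄ ∧ x₁ < x₂ := by
  have two : ∀ {y₁ y₂ y₃ : ℝ}, y₁ ^ 2 = p * y₁ + q → y₂ ^ 2 = p * y₂ + q →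
      y₃ ^ 2 = p * y₃ + q → y₁ = y₂ ∨ y₁ = y₃ ∨ y₂ = y₃ := fun h h' h'' =>
    eq_or_eq_or_eq_of_roots one_ne_zero (B := -p) (C := -q) (by linear_combination h)
      (by linear_combination h') (by linear_combination h'')
  have three : ∀ {θ₁ θ₂ θ₃ y₁ y₂ y₃ : ℝ}, SpectralRel k a b c θ₁ y₁ →
      SpectralRel k a b c θ₂ y₂ → SpectralRel k a b c θ₃ y₃ → θ₂ < θ₁ → θ₃ < θ₂ →
      ¬(y₁ = y₂ ∧ y₁ = y₃) := by
    rintro θ₁ θ₂ θ₃ y₁ y₂ y₃ g₁ g₂ g₃ hlt hlt' ⟨rfl, rfl⟩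
    rcases g₁.eq_or_eq_or_eq hp.b_three_pos.ne' g₂ g₃ with h | h | h <;> linarith
  rcases pairing_of_two_values (two hq₁ hq₂ hq₃) (two hq₁ hq₂ hq₄) (two hq₁ hq₃ hq₄)
      (two hq₂ hq₃ hq₄) (three h₁ h₂ h₃ h₁₂ h₂₃) (three h₁ h₂ h₄ h₁₂ (h₃₄.trans h₂₃))
      (three h₁ h₃ h₄ (h₂₃.trans h₁₂) h₃₄) (three h₂ h₃ h₄ h₂₃ h₃₄)
    with ⟨rfl, rfl, hne⟩ | ⟨rfl, rfl, hne⟩ | ⟨rfl, rfl, hne⟩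
  · have hb := (h₁.isSharedValue h₂ h₁₂.ne').b_three_eq hp (h₃.isSharedValue h₄ h₃₄.ne') hne
    linarith [(neg_one_mem_Ioo hp hb h₁ h₂ h₁₂).1, (neg_one_mem_Ioo hp hb h₃ h₄ h₃₄).2]
  · have hb := (h₁.isSharedValue h₃ (h₂₃.trans h₁₂).ne').b_three_eq hp
      (h₂.isSharedValue h₄ (h₃₄.trans h₂₃).ne') hne
    exact ⟨rfl, rfl, value_lt_of_lt hp hb h₂ h₄ h₁ (h₃₄.trans h₂₃) h₁₂⟩
  · have hb := (h₁.isSharedValue h₄ ((h₃₄.trans h₂₃).trans h₁₂).ne').b_three_eq hp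
      (h₂.isSharedValue h₃ h₂₃.ne') hne
    have hlt := value_lt_of_mem_Ioo hp hb h₁ h₄ h₃ h₃₄ (h₂₃.trans h₁₂)
      (neg_one_mem_Ioo hp hb h₂ h₃ h₂₃).1
    linarith [value_lt_of_lt hp hb h₂ h₃ h₁ h₂₃ h₁₂]

lemma add_eq_of_a_four_eq_zero (hp : IsDiam4Array k a b c) (h₁ : SpectralRel k a b c α x)
    (h₃ : SpectralRel k a b c β x) (h₂ : SpectralRel k a b c γ y) (h₄ : SpectralRel k a b c δ y)
    (hαβ : α ≠ β) (hγδ : γ ≠ δ) (hxy : x < y) (ha : a 4 = 0) : α + β = a 1 := by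
  have hx := h₁.isSharedValue h₃ hαβ
  have hy := h₂.isSharedValue h₄ hγδ
  have hb : b 3 = 1 := by rw [hx.b_three_eq hp hy hxy.ne, ha, zero_add]
  have hc : c 3 = b 1 := by
    linear_combination hx.c_three_mul_b_three hp hy hxy.ne - c 3 * hb - hp.add_add_one +
      hp.c_one
  have ha₃ : a 3 = a 1 := by
    linear_combination hp.add_add_three - hp.add_add_one - hc - hb + hp.c_one
  have hmul := hx.mul_eq hy hxy.ne
  have hadd := hx.add_eq hy hxy.ne
  rw [hb] at hmul hadd
  have h : c 2 * ((1 + x) * (1 + y)) = 0 := by linear_combination hadd + hmul - ha₃ - ha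
  rcases mul_eq_zero.mp ((mul_eq_zero.mp h).resolve_left hp.c_two_pos.ne') with hx₁ | hy₁
  · linear_combination (h₁.vieta h₃ hαβ).1 - c 2 * hx₁ - (α + β + c 2 - a 1) * hb
  · have : c 2 * x < 0 := mul_neg_of_pos_of_neg hp.c_two_pos (by linarith)
    nlinarith [hp.b_two_pos]

lemma mu_eq_zero_of_add_eq (hp : IsDiam4Array k a b c) (h₁ : SpectralRel k a b c α x)
    (h₃ : SpectralRel k a b c β x) (h₂ : SpectralRel k a b c γ y) (h₄ : SpectralRel k a b c δ y)
    (hαβ : α ≠ β) (hγδ : γ ≠ δ) (hxy : x < y) {ℓ μ k₄ : ℝ}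
    (hqx : x ^ 2 = (ℓ - μ) * x + (k₄ - μ)) (hqy : y ^ 2 = (ℓ - μ) * y + (k₄ - μ))
    (hk₄ : (∏ i ∈ Finset.range 4, c (i + 1)) * k₄ = ∏ i ∈ Finset.range 4, b i)
    (hsum : α + β = a 1) : μ = 0 := by
  have hx := h₁.isSharedValue h₃ hαβ
  have hy := h₂.isSharedValue h₄ hγδ
  have hb₃ := hp.b_three_pos
  have hc₂ := hp.c_two_pos
  have hmul := hx.mul_eq hy hxy.ne
  have hadd := hx.add_eq hy hxy.ne
  have hb := hx.b_three_eq hp hy hxy.ne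
  have hx₁ : x = -b 3 := by
    have h : c 2 * (x + b 3) = 0 := by linear_combination (h₁.vieta h₃ hαβ).1 - b 3 * hsum
    linarith [(mul_eq_zero.mp h).resolve_left hc₂.ne']
  have hy₁ : c 2 * y = b 2 * b 3 := by
    have h : b 3 * (c 2 * y - b 2 * b 3) = 0 := by linear_combination -hmul + c 2 * y * hx₁
    linarith [(mul_eq_zero.mp h).resolve_left hb₃.ne']
  have ha : a 1 = a 3 + a 4 := by
    have h : b 3 * (a 1 - a 3 - a 4) = 0 := by linear_combination -hadd + hy₁ + c 2 * hx₁
    linarith [(mul_eq_zero.mp h).resolve_left hb₃.ne']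
  have hb₁ : b 3 = 1 := by
    have h : c 3 * (b 3 - 1) = 0 := by
      linear_combination hx.c_three_mul_b_three hp hy hxy.ne - hp.add_add_three - ha + hb
    linarith [(mul_eq_zero.mp h).resolve_left hp.c_three_pos.ne']
  have hprod : x * y = μ - k₄ := by
    linear_combination (vieta_of_roots (A := 1) (B := -(ℓ - μ)) (C := -(k₄ - μ))
      (by linear_combination hqx) (by linear_combination hqy) hxy.ne).2
  have hc₄ : c 4 = k := by linear_combination hp.add_four + hb - hb₁
  have hc₃ : b 1 = c 3 := by
    linear_combination hp.add_add_one - hp.c_one - hx.c_three_mul_b_three hp hy hxy.ne +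
      c 3 * hb₁
  have hk : k * c 3 * (c 2 * k₄ - b 2) = 0 := by
    simp only [Finset.prod_range_succ, Finset.prod_range_zero, hp.c_one, hp.b_zero] at hk₄
    linear_combination hk₄ - c 2 * c 3 * k₄ * hc₄ + k * b 2 * b 3 * hc₃ + k * c 3 * b 2 * hb₁
  have hck : c 2 * k₄ = b 2 := by
    have := (mul_eq_zero.mp hk).resolve_left (mul_pos hp.k_pos hp.c_three_pos).ne'
    linarith
  have h : c 2 * μ = 0 := by
    linear_combination hmul - c 2 * hprod + hck - b 2 * (b 3 + 1) * hb₁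
  exact (mul_eq_zero.mp h).resolve_left hc₂.ne'

end SpectralRel

namespace SimpleGraph.IsDistRegular

open Matrix

variable {V : Type*} [Fintype V] {G : SimpleGraph V} {c a b : ℕ → ℕ} {k : ℕ}

lemma isDiam4Array (hdrg : G.IsDistRegular 4 c a b) (hconn : G.Connected)
    (hreg : G.IsRegularOfDegree k) (hdiam : ∀ u v : V, G.dist u v ≤ 4)
    (hdiam' : ∃ u v : V, G.dist u v = 4) :
    IsDiam4Array k (fun i => a i) (fun i => b i) (fun i => c i) := by
  have hpart := fun i hi hid => hdrg.add_add_eq hconn hreg hdiam' (i := i) hi hid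
  obtain ⟨u, v, huv⟩ := hdiam'
  have hb₀ := hdrg.b_zero hreg u
  have hc₁ := hdrg.c_one hconn ⟨u, v, huv⟩ (by norm_num)
  have hb₄ := hdrg.b_eq_zero hdiam huv
  have hb := fun i (hi : i < 4) => hdrg.b_pos hconn ⟨u, v, huv⟩ hi
  have hc := fun i hi (hid : i ≤ 4) => hdrg.c_pos hconn ⟨u, v, huv⟩ hi hid
  have h₁ := hpart 1 (by norm_num) (by norm_num)
  have h₃ := hpart 3 (by norm_num) (by norm_num)
  have h₄ := hpart 4 (by norm_num) le_rfl
  refine ⟨by exact_mod_cast hb₀, by exact_mod_cast hc₁, by exact_mod_cast hb 1 (by norm_num),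
    by exact_mod_cast hb 2 (by norm_num), by exact_mod_cast hb 3 (by norm_num),
    by exact_mod_cast hc 2 (by norm_num) (by norm_num),
    by exact_mod_cast hc 3 (by norm_num) (by norm_num), by exact_mod_cast (by omega : 0 < k),
    by exact_mod_cast h₁, by exact_mod_cast h₃, by exact_mod_cast (by omega : c 4 + a 4 = k)⟩

lemma prod_c_mul_eq_prod_b [DecidableEq V] {d : ℕ} (hdrg : G.IsDistRegular d c a b)
    (hconn : G.Connected) (hreg : G.IsRegularOfDegree k) (hdiam : ∀ u v : V, G.dist u v ≤ d)
    (hdiam' : ∃ u v : V, G.dist u v = d) (hd : 0 < d) {k_d : ℕ}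
    (hk_d : (G.distGraph d).IsRegularOfDegree k_d) :
    (∏ i ∈ range d, (c (i + 1) : ℝ)) * k_d = ∏ i ∈ range d, (b i : ℝ) := by
  obtain ⟨u, v, huv⟩ := hdiam'
  have hc := fun i hi hid => hdrg.c_pos hconn ⟨u, v, huv⟩ (i := i) hi hid
  have hones : G.adjMatrix ℝ *ᵥ Function.const V 1 = (k : ℝ) • Function.const V 1 := by
    ext w
    simp [hreg w]
  have h := congrFun (hdrg.distMatrix_mulVec hconn hdiam hc hones d le_rfl) u
  rw [← adjMatrix_distGraph hd, adjMatrix_mulVec_const_apply_of_regular hk_d] at h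
  simp only [mul_one, Pi.smul_apply, Function.const_apply, smul_eq_mul] at h
  rw [h]
  exact prod_c_mul_distPoly_eq_prod_b (hdrg.b_zero hreg u) (hdrg.c_one hconn ⟨u, v, huv⟩ hd) hc
    (fun i hi hid => hdrg.add_add_eq hconn hreg ⟨u, v, huv⟩ hi hid.le) d le_rfl

lemma exists_spectralRel [DecidableEq V] (hdrg : G.IsDistRegular 4 c a b) (hconn : G.Connected)
    (hreg : G.IsRegularOfDegree k) (hdiam : ∀ u v : V, G.dist u v ≤ 4)
    (hdiam' : ∃ u v : V, G.dist u v = 4) {n₄ k₄ ℓ μ : ℕ}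
    (hsrg : (G.distGraph 4).IsSRGWith n₄ k₄ ℓ μ) {θ : ℝ}
    (hθ : Module.End.HasEigenvalue G.adjEnd θ) (hθk : θ ≠ k) :
    ∃ x, SpectralRel k (fun i => a i) (fun i => b i) (fun i => c i) θ x ∧
      x ^ 2 = (ℓ - μ) * x + (k₄ - μ) := by
  obtain ⟨v, hv0, hv⟩ := exists_mulVec_eq_smul_of_hasEigenvalue hθ
  have hc := fun i hi hid => hdrg.c_pos hconn hdiam' (i := i) hi hid
  obtain ⟨u, -⟩ := hdiam'
  have hsum := hdrg.sum_distPoly hconn hdiam hc hreg hv0 hv hθk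
  simp only [sum_range_succ, sum_range_zero, zero_add] at hsum
  refine ⟨distPoly a b c θ 4, SpectralRel.of_recurrence (p₂ := distPoly a b c θ 2)
    (p₃ := distPoly a b c θ 3) ?_ ?_ ?_ (by simpa [distPoly] using hsum)
    (by simpa using hdrg.distPoly_top hconn hdiam hc (by norm_num) hv0 hv), ?_⟩
  · rw [mul_distPoly_add_two (hc 2 (by norm_num) (by norm_num)).ne', hdrg.b_zero hreg u]
    simp only [distPoly]
    ring
  · exact mul_distPoly_add_two (hc 3 (by norm_num) (by norm_num)).ne'
  · exact mul_distPoly_add_two (hc 4 (by norm_num) le_rfl).ne'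
  · refine hsrg.sq_eq_of_mulVec_eq_smul hv0 (sum_eq_zero_of_mulVec_eq_smul hreg hv hθk) ?_
    rw [adjMatrix_distGraph (by norm_num), hdrg.distMatrix_mulVec hconn hdiam hc hv 4 le_rfl]

end SimpleGraph.IsDistRegular

theorem stmt_4_general {V : Type*} [Fintype V] [DecidableEq V] (G : SimpleGraph V)
    (k : ℕ) (c a b : ℕ → ℕ) (lam : Fin 5 → ℝ) (m : Fin 5 → ℕ)
    (hconn : G.Connected)
    (hreg : G.IsRegularOfDegree k)
    (hdiam : ∀ u v : V, G.dist u v ≤ 4) (hdiam' : ∃ u v : V, G.dist u v = 4)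
    (hdrg : G.IsDistRegular 4 c a b)
    (hspec : G.HasSpectrum lam m)
    (hlam0 : lam 0 = (k : ℝ))
    (hsdrg : G.IsStronglyDRG 4) :
    G.IsAntipodal 4 ↔ lam 1 + lam 3 = (a 1 : ℝ) := by
  obtain ⟨n₄, k₄, ℓ, μ, hsrg⟩ := hsdrg
  have hp := hdrg.isDiam4Array hconn hreg hdiam hdiam'
  have hrel := fun i (hi : 0 < i) => hdrg.exists_spectralRel hconn hreg hdiam hdiam' hsrg
    (hspec.2.1 i) (hlam0 ▸ (hspec.1 hi).ne)
  obtain ⟨x₁, h₁, hq₁⟩ := hrel 1 (by decide)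
  obtain ⟨x₂, h₂, hq₂⟩ := hrel 2 (by decide)
  obtain ⟨x₃, h₃, hq₃⟩ := hrel 3 (by decide)
  obtain ⟨x₄, h₄, hq₄⟩ := hrel 4 (by decide)
  obtain ⟨rfl, rfl, hlt⟩ := SpectralRel.pairing_one_three hp h₁ h₂ h₃ h₄ (hspec.1 (by decide))
    (hspec.1 (by decide)) (hspec.1 (by decide)) hq₁ hq₂ hq₃ hq₄
  have h₁₃ : lam 1 ≠ lam 3 := (hspec.1 (by decide : (1 : Fin 5) < 3)).ne'
  have h₂₄ : lam 2 ≠ lam 4 := (hspec.1 (by decide : (2 : Fin 5) < 4)).ne'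
  constructor
  · intro hant
    obtain ⟨u, v, huv⟩ := hdiam'
    exact SpectralRel.add_eq_of_a_four_eq_zero hp h₁ h₃ h₂ h₄ h₁₃ h₂₄ hlt
      (by exact_mod_cast hdrg.a_eq_zero_of_isAntipodal hant (by norm_num) huv)
  · intro hsum
    obtain rfl : μ = 0 := by
      exact_mod_cast SpectralRel.mu_eq_zero_of_add_eq hp h₁ h₃ h₂ h₄ h₁₃ h₂₄ hlt hq₁ hq₂
        (hdrg.prod_c_mul_eq_prod_b hconn hreg hdiam hdiam' (by norm_num) hsrg.regular) hsum
    exact SimpleGraph.isAntipodal_of_isSRGWith (by norm_num) hsrg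

theorem stmt_4 {V : Type*} [Fintype V] [DecidableEq V] (G : SimpleGraph V)
    (n k : ℕ) (c a b : ℕ → ℕ) (lam : Fin 5 → ℝ) (m : Fin 5 → ℕ)
    (hn : Fintype.card V = n)
    (hconn : G.Connected)
    (hreg : G.IsRegularOfDegree k)
    (hdiam : ∀ u v : V, G.dist u v ≤ 4) (hdiam' : ∃ u v : V, G.dist u v = 4)
    (hdrg : G.IsDistRegular 4 c a b)
    (hspec : G.HasSpectrum lam m)
    (hlam0 : lam 0 = (k : ℝ)) (hm0 : m 0 = 1)
    (hsdrg : G.IsStronglyDRG 4) :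
    G.IsAntipodal 4 ↔ lam 1 + lam 3 = (a 1 : ℝ) :=
  stmt_4_general G k c a b lam m hconn hreg hdiam hdiam' hdrg hspec hlam0 hsdrg
end

section
/- If G is bipartite and strongly distance-regular, then G is antipodal. -/
open Finset

attribute [local instance] Classical.propDecidable

/-!
In a bipartite graph a closed walk `u ⇝ z ⇝ x → u` through an edge `xu` has even length, so
`dist u z` and `dist z x` have different parities. Hence, for even `d`, the ends of an edge of `G`
are non-adjacent in the distance-`d` graph `G_d` and have no common `G_d`-neighbour, which forces
`μ = 0` once `G_d` is strongly regular. A strongly regular graph with `μ = 0` is a disjoint union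
of cliques, and its cliques are the antipodal classes.
-/

namespace SimpleGraph

variable {V : Type*} {G : SimpleGraph V} {u x z : V} {d : ℕ}

theorem Colorable.odd_dist_add_dist_of_adj (hG : G.Colorable 2) (h : G.Adj u x)
    (hz : G.Reachable u z) : Odd (G.dist u z + G.dist z x) := by
  obtain ⟨p, hp⟩ := hz.exists_walk_length_eq_dist
  obtain ⟨q, hq⟩ := (hz.symm.trans h.reachable).exists_walk_length_eq_dist
  have hloop := two_colorable_iff_forall_loop_even.mp hG u ((p.append q).concat h.symm)
  rw [Walk.length_concat, Walk.length_append, hp, hq, Nat.even_add_one] at hloop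
  exact Nat.not_even_iff_odd.mp hloop

@[simp]
theorem distGraph_adj : (G.distGraph d).Adj u x ↔ u ≠ x ∧ G.dist u x = d :=
  Iff.rfl

theorem eq_or_distGraph_adj_iff : u = x ∨ (G.distGraph d).Adj u x ↔ u = x ∨ G.dist u x = d := by
  rw [distGraph_adj]
  tauto

theorem Colorable.not_distGraph_adj_of_adj (hG : G.Colorable 2) (hd : Even d) (h : G.Adj u x) :
    ¬(G.distGraph d).Adj u x := by
  rintro ⟨-, hux⟩
  have := hG.odd_dist_add_dist_of_adj h h.reachable
  rw [hux, dist_self, add_zero] at this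
  exact Nat.not_odd_iff_even.mpr hd this

theorem Colorable.commonNeighbors_distGraph_eq_empty_of_adj (hG : G.Colorable 2) (hd : Even d)
    (hd0 : d ≠ 0) (h : G.Adj u x) : (G.distGraph d).commonNeighbors u x = ∅ := by
  refine Set.eq_empty_of_forall_notMem fun z ⟨⟨_, huz⟩, ⟨_, hxz⟩⟩ => ?_
  have := hG.odd_dist_add_dist_of_adj h (Reachable.of_dist_ne_zero (huz ▸ hd0))
  rw [huz, dist_comm, hxz] at this
  exact Nat.not_odd_iff_even.mpr (hd.add hd) this

theorem IsCompleteMultipartite.equivalence_eq_or_adj_of_compl {H : SimpleGraph V}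
    (h : Hᶜ.IsCompleteMultipartite) : Equivalence fun u v => u = v ∨ H.Adj u v := by
  have hrel : (fun u v => u = v ∨ H.Adj u v) = (¬Hᶜ.Adj · ·) := by
    funext u v
    simp only [compl_adj, not_and, not_not, eq_iff_iff]
    tauto
  exact hrel ▸ h.setoid.iseqv

variable [Fintype V] {n k ℓ μ : ℕ}

theorem Colorable.distGraph_mu_eq_zero (hG : G.Colorable 2) (hd : Even d) (hd0 : d ≠ 0)
    (h : (G.distGraph d).IsSRGWith n k ℓ μ) (hne : G.distGraph d ≠ ⊥) : μ = 0 := by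
  obtain ⟨v, w, ⟨-, hvw⟩⟩ := ne_bot_iff_exists_adj.mp hne
  obtain ⟨p, hp⟩ := exists_walk_of_dist_ne_zero (hvw ▸ hd0)
  cases p with
  | nil => exact absurd (hp.trans hvw) hd0.symm
  | @cons _ x _ hvx _ =>
    rw [← h.of_not_adj hvx.ne (hG.not_distGraph_adj_of_adj hd hvx)]
    exact Fintype.card_eq_zero_iff.mpr
      (Set.isEmpty_coe_sort.mpr (hG.commonNeighbors_distGraph_eq_empty_of_adj hd hd0 hvx))

theorem IsSRGWith.compl_isCompleteMultipartite {H : SimpleGraph V}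
    (h : H.IsSRGWith n k ℓ μ) (hμ : H ≠ ⊥ → μ = 0) : Hᶜ.IsCompleteMultipartite := by
  refine ⟨fun u v w huv hvw => ?_⟩
  simp only [compl_adj, not_and, not_not] at huv hvw ⊢
  intro huw
  by_cases hu : u = v
  · subst hu
    exact hvw huw
  by_cases hw : v = w
  · exact hw ▸ huv hu
  by_contra hnadj
  have hcard := h.of_not_adj huw hnadj
  rw [hμ (ne_bot_iff_exists_adj.mpr ⟨u, v, huv hu⟩)] at hcard
  exact (Fintype.card_eq_zero_iff.mp hcard).false ⟨v, huv hu, (hvw hw).symm⟩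

end SimpleGraph

theorem stmt_7_general {V : Type*} [Fintype V] (G : SimpleGraph V)
    (hbip : G.Colorable 2) (hsdrg : G.IsStronglyDRG 4) :
    G.IsAntipodal 4 := by
  obtain ⟨n, k, ℓ, μ, hsrg⟩ := hsdrg
  have hmu := hbip.distGraph_mu_eq_zero (by decide) (by decide) hsrg
  have := (hsrg.compl_isCompleteMultipartite hmu).equivalence_eq_or_adj_of_compl
  simpa only [SimpleGraph.IsAntipodal, SimpleGraph.eq_or_distGraph_adj_iff] using this

theorem stmt_7 {V : Type*} [Fintype V] [DecidableEq V] (G : SimpleGraph V)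
    (n k : ℕ) (c a b : ℕ → ℕ) (lam : Fin 5 → ℝ) (m : Fin 5 → ℕ)
    (hn : Fintype.card V = n)
    (hconn : G.Connected)
    (hreg : G.IsRegularOfDegree k)
    (hdiam : ∀ u v : V, G.dist u v ≤ 4) (hdiam' : ∃ u v : V, G.dist u v = 4)
    (hdrg : G.IsDistRegular 4 c a b)
    (hspec : G.HasSpectrum lam m)
    (hlam0 : lam 0 = (k : ℝ)) (hm0 : m 0 = 1)
    (hbip : G.Colorable 2) (hsdrg : G.IsStronglyDRG 4) :
    G.IsAntipodal 4 :=
  stmt_7_general G hbip hsdrg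
end

section
/- One has ∑_{i=0}^{4} m_i·(λ_i − λ0)(λ_i − λ2)(λ_i − λ4) = n·(k·a1 − (λ0 + λ2 + λ4)·k − λ0·λ2·λ4); consequently, m1·π1 = m3·π3 if and only if k·a1 − (λ0 + λ2 + λ4)·k − λ0·λ2·λ4 = 0. -/
open Finset

attribute [local instance] Classical.propDecidable

/-!
The spectrum enters only through the power moments `∑ mᵢ λᵢ ^ p = tr (A ^ p)` of the adjacency
matrix `A` (decompose the symmetric `A` over its eigenspaces). Counting closed walks, these are
`n, 0, n k, n k a₁` for `p = 0, …, 3`, and expanding the cubic `(x - λ₀)(x - λ₂)(x - λ₄)` in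
moments gives the identity. Only the terms `i = 1, 3` of its left side survive; after multiplication
by `λ₁ - λ₃ ≠ 0` they become `m₃ π₃ - m₁ π₁`, because `πᵢ = (-1)ⁱ ∏_{j ≠ i} (λᵢ - λⱼ)` for a
decreasing sequence of eigenvalues. As `n > 0`, the equivalence follows.
-/

namespace Module.End

variable {K M : Type*} [Field K] [AddCommGroup M] [Module K M]

theorem eigenspace_conj {N : Type*} [AddCommGroup N] [Module K N] (e : M ≃ₗ[K] N)
    (f : End K M) (μ : K) :
    (e.conj f).eigenspace μ = (f.eigenspace μ).map (e : M →ₗ[K] N) := by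
  ext x
  rw [Submodule.mem_map_equiv, mem_eigenspace_iff, mem_eigenspace_iff,
    LinearEquiv.conj_apply_apply, ← e.symm.injective.eq_iff, e.symm_apply_apply, map_smul]

theorem pow_apply_of_mem_eigenspace {f : End K M} {μ : K} {x : M} (hx : x ∈ f.eigenspace μ)
    (p : ℕ) : (f ^ p) x = μ ^ p • x := by
  induction p <;> simp [*, pow_succ f, mem_eigenspace_iff.mp hx, smul_smul, pow_succ' μ]

theorem trace_pow_eq_sum_finrank_eigenspace [FiniteDimensional K M] {ι : Type*} [Fintype ι]
    {f : End K M} (hf : ⨆ μ, f.eigenspace μ = ⊤) {lam : ι → K} (hinj : Function.Injective lam)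
    (hlam : ∀ μ, f.HasEigenvalue μ → ∃ i, μ = lam i) (p : ℕ) :
    LinearMap.trace K M (f ^ p) =
      ∑ i, (Module.finrank K (f.eigenspace (lam i)) : K) * lam i ^ p := by
  have hsup : ⨆ i, f.eigenspace (lam i) = ⊤ := by
    refine eq_top_iff.mpr (hf ▸ iSup_le fun μ => ?_)
    by_cases hμ : f.HasEigenvalue μ
    · obtain ⟨i, rfl⟩ := hlam μ hμ
      exact le_iSup (fun i => f.eigenspace (lam i)) i
    · rw [hasEigenvalue_iff, not_not] at hμ
      exact hμ ▸ bot_le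
  have hint : DirectSum.IsInternal fun i => f.eigenspace (lam i) :=
    DirectSum.isInternal_submodule_of_iSupIndep_of_iSup_eq_top
      (f.eigenspaces_iSupIndep.comp hinj) hsup
  have hmaps : ∀ i, Set.MapsTo (f ^ p) (f.eigenspace (lam i)) (f.eigenspace (lam i)) :=
    fun i x hx => by
      rw [SetLike.mem_coe, pow_apply_of_mem_eigenspace hx]
      exact Submodule.smul_mem _ _ hx
  rw [LinearMap.trace_eq_sum_trace_restrict hint hmaps]
  refine Finset.sum_congr rfl fun i _ => ?_
  have hrestrict : (f ^ p).restrict (hmaps i) = lam i ^ p • 1 := by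
    ext x
    exact pow_apply_of_mem_eigenspace x.2 p
  rw [hrestrict, map_smul, LinearMap.trace_one, smul_eq_mul, mul_comm]

end Module.End

theorem Matrix.IsHermitian.iSup_eigenspace_toLin'_eq_top {𝕜 n : Type*} [RCLike 𝕜] [Fintype n]
    [DecidableEq n] {A : Matrix n n 𝕜} (hA : A.IsHermitian) :
    ⨆ μ, Module.End.eigenspace (Matrix.toLin' A) μ = ⊤ := by
  have htop := Submodule.orthogonal_eq_bot_iff.mp
    (Matrix.isSymmetric_toEuclideanLin_iff.mpr hA).orthogonalComplement_iSup_eigenspaces_eq_bot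
  have hconj : Matrix.toEuclideanLin A =
      (WithLp.linearEquiv 2 𝕜 (n → 𝕜)).symm.conj (Matrix.toLin' A) := rfl
  rwa [hconj, iSup_congr fun μ => Module.End.eigenspace_conj _ _ μ, ← Submodule.map_iSup,
    Submodule.map_eq_top_iff] at htop

namespace SimpleGraph

variable {V : Type*} [Fintype V] [DecidableEq V] {G : SimpleGraph V}

theorem HasSpectrum.sum_mul_pow_eq_trace {d : ℕ} {lam : Fin (d + 1) → ℝ}
    {m : Fin (d + 1) → ℕ} (h : G.HasSpectrum lam m) (p : ℕ) :
    ∑ i, (m i : ℝ) * lam i ^ p = (G.adjMatrix ℝ ^ p).trace := by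
  obtain ⟨hanti, -, hall, hmult⟩ := h
  have hsup := (Matrix.isHermitian_iff_isSymm.mpr
    (G.isSymm_adjMatrix (α := ℝ))).iSup_eigenspace_toLin'_eq_top
  rw [← Matrix.trace_toLin'_eq, Matrix.toLin'_pow,
    Module.End.trace_pow_eq_sum_finrank_eigenspace hsup hanti.injective hall p]
  simp only [hmult]
  rfl

variable [DecidableRel G.Adj]

theorem IsRegularOfDegree.trace_adjMatrix_sq {k : ℕ} (h : G.IsRegularOfDegree k) :
    (G.adjMatrix ℝ ^ 2).trace = Fintype.card V * k := by
  simp only [Matrix.trace, Matrix.diag_apply, sq, adjMatrix_mul_self_apply_self, h.degree_eq]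
  simp

theorem IsRegularOfDegree.trace_adjMatrix_pow_three {k l : ℕ} (h : G.IsRegularOfDegree k)
    (htri : ∀ u v, G.Adj u v → #{w ∈ G.neighborFinset v | G.Adj u w} = l) :
    (G.adjMatrix ℝ ^ 3).trace = Fintype.card V * k * l := by
  have hsq : ∀ u v, G.Adj u v → (G.adjMatrix ℝ * G.adjMatrix ℝ) v u = l := by
    intro u v huv
    simp [htri v u huv.symm]
  have hdiag : ∀ u, (G.adjMatrix ℝ ^ 3) u u = k * l := by
    intro u
    rw [pow_succ', sq, adjMatrix_mul_apply,
      Finset.sum_congr rfl fun v hv => hsq u v ((G.mem_neighborFinset u v).mp hv)]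
    simp [h.degree_eq]
  simp [Matrix.trace, hdiag, Finset.card_univ, mul_assoc]

end SimpleGraph

theorem SimpleGraph.IsDistRegular.card_filter_adj_of_adj {V : Type*} [Fintype V]
    {G : SimpleGraph V} [DecidableRel G.Adj] {d : ℕ} {c a b : ℕ → ℕ}
    (h : G.IsDistRegular d c a b) (hd : 1 ≤ d) {u v : V} (huv : G.Adj u v) :
    #{w ∈ G.neighborFinset v | G.Adj u w} = a 1 := by
  rw [← (h 1 hd u v (SimpleGraph.dist_eq_one_iff_adj.mpr huv)).2.1]
  congr 1
  ext w
  simp [SimpleGraph.dist_eq_one_iff_adj]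

theorem Finset.sum_mul_sub_mul_sub_mul_sub {ι R : Type*} [CommRing R] (s : Finset ι) (m x : ι → R)
    (a b c : R) :
    ∑ i ∈ s, m i * (x i - a) * (x i - b) * (x i - c) =
      ∑ i ∈ s, m i * x i ^ 3 - (a + b + c) * ∑ i ∈ s, m i * x i ^ 2 +
        (a * b + a * c + b * c) * ∑ i ∈ s, m i * x i ^ 1 - a * b * c * ∑ i ∈ s, m i * x i ^ 0 := by
  simp only [Finset.mul_sum, ← Finset.sum_sub_distrib, ← Finset.sum_add_distrib]
  exact Finset.sum_congr rfl fun i _ => by ring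

theorem StrictAnti.prod_abs_sub_erase {R : Type*} [Field R] [LinearOrder R] [IsStrictOrderedRing R]
    {n : ℕ} {x : Fin n → R} (hx : StrictAnti x) (i : Fin n) :
    ∏ j ∈ univ.erase i, |x i - x j| = (-1) ^ (i : ℕ) * ∏ j ∈ univ.erase i, (x i - x j) := by
  have hsign : ∀ j ∈ univ.erase i, |x i - x j| = (if j < i then -1 else 1) * (x i - x j) := by
    intro j hj
    rcases lt_or_gt_of_ne (Finset.ne_of_mem_erase hj) with hji | hij
    · simp [hji, abs_of_neg (sub_neg.mpr (hx hji))]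
    · simp [hij.not_gt, abs_of_pos (sub_pos.mpr (hx hij))]
  rw [Finset.prod_congr rfl hsign, Finset.prod_mul_distrib, Finset.prod_ite, Finset.prod_const,
    Finset.prod_const_one, mul_one, ← Fin.card_Iio i]
  congr 3
  ext j
  simpa using ne_of_lt

theorem sub_mul_sum_eq_mul_prod_sub_erase {R : Type*} [CommRing R] (x m : Fin 5 → R) :
    (x 1 - x 3) * ∑ i, m i * (x i - x 0) * (x i - x 2) * (x i - x 4) =
      m 1 * ∏ j ∈ univ.erase 1, (x 1 - x j) - m 3 * ∏ j ∈ univ.erase 3, (x 3 - x j) := by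
  rw [show univ.erase (1 : Fin 5) = {0, 2, 3, 4} by decide,
    show univ.erase (3 : Fin 5) = {0, 1, 2, 4} by decide, Fin.sum_univ_five]
  simp only [prod_insert, mem_insert, mem_singleton, prod_singleton, Fin.reduceEq, or_self,
    not_false_eq_true]
  ring

theorem stmt_10_general {V : Type*} [Fintype V] [DecidableEq V] (G : SimpleGraph V)
    (n k : ℕ) (c a b : ℕ → ℕ) (lam : Fin 5 → ℝ) (m : Fin 5 → ℕ)
    (hn : Fintype.card V = n)
    (hconn : G.Connected)
    (hreg : G.IsRegularOfDegree k)
    (hdrg : G.IsDistRegular 4 c a b)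
    (hspec : G.HasSpectrum lam m)
    (pi : Fin 5 → ℝ) (hpi : ∀ i, pi i = ∏ j ∈ Finset.univ.erase i, |lam i - lam j|) :
    (∑ i, (m i : ℝ) * (lam i - lam 0) * (lam i - lam 2) * (lam i - lam 4) =
      (n : ℝ) * ((k : ℝ) * a 1 - (lam 0 + lam 2 + lam 4) * k - lam 0 * lam 2 * lam 4)) ∧
    ((m 1 : ℝ) * pi 1 = (m 3 : ℝ) * pi 3 ↔
      (k : ℝ) * a 1 - (lam 0 + lam 2 + lam 4) * k - lam 0 * lam 2 * lam 4 = 0) := by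
  have hsum : ∑ i, (m i : ℝ) * (lam i - lam 0) * (lam i - lam 2) * (lam i - lam 4) =
      (n : ℝ) * ((k : ℝ) * a 1 - (lam 0 + lam 2 + lam 4) * k - lam 0 * lam 2 * lam 4) := by
    rw [Finset.sum_mul_sub_mul_sub_mul_sub, hspec.sum_mul_pow_eq_trace 3,
      hspec.sum_mul_pow_eq_trace 2, hspec.sum_mul_pow_eq_trace 1, hspec.sum_mul_pow_eq_trace 0,
      pow_zero, pow_one, Matrix.trace_one, SimpleGraph.trace_adjMatrix, hreg.trace_adjMatrix_sq,
      hreg.trace_adjMatrix_pow_three fun u v => hdrg.card_filter_adj_of_adj (by norm_num), hn]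
    ring
  refine ⟨hsum, ?_⟩
  have hn0 : (n : ℝ) ≠ 0 := by
    have := hconn.nonempty
    exact_mod_cast hn ▸ Fintype.card_ne_zero
  have h13 : lam 1 - lam 3 ≠ 0 := sub_ne_zero.mpr (hspec.1 (by decide : (1 : Fin 5) < 3)).ne'
  have hdiff := sub_mul_sum_eq_mul_prod_sub_erase lam (fun i => (m i : ℝ))
  have hpi1 : pi 1 = -∏ j ∈ univ.erase 1, (lam 1 - lam j) := by
    rw [hpi, hspec.1.prod_abs_sub_erase]; norm_num
  have hpi3 : pi 3 = -∏ j ∈ univ.erase 3, (lam 3 - lam j) := by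
    rw [hpi, hspec.1.prod_abs_sub_erase]; norm_num
  rw [hpi1, hpi3, mul_neg, mul_neg, neg_inj, ← sub_eq_zero, ← hdiff, hsum]
  simp [h13, hn0]

theorem stmt_10 {V : Type*} [Fintype V] [DecidableEq V] (G : SimpleGraph V)
    (n k : ℕ) (c a b : ℕ → ℕ) (lam : Fin 5 → ℝ) (m : Fin 5 → ℕ)
    (hn : Fintype.card V = n)
    (hconn : G.Connected)
    (hreg : G.IsRegularOfDegree k)
    (hdiam : ∀ u v : V, G.dist u v ≤ 4) (hdiam' : ∃ u v : V, G.dist u v = 4)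
    (hdrg : G.IsDistRegular 4 c a b)
    (hspec : G.HasSpectrum lam m)
    (hlam0 : lam 0 = (k : ℝ)) (hm0 : m 0 = 1)
    (pi : Fin 5 → ℝ) (hpi : ∀ i, pi i = ∏ j ∈ Finset.univ.erase i, |lam i - lam j|) :
    (∑ i, (m i : ℝ) * (lam i - lam 0) * (lam i - lam 2) * (lam i - lam 4) =
      (n : ℝ) * ((k : ℝ) * a 1 - (lam 0 + lam 2 + lam 4) * k - lam 0 * lam 2 * lam 4)) ∧
    ((m 1 : ℝ) * pi 1 = (m 3 : ℝ) * pi 3 ↔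
      (k : ℝ) * a 1 - (lam 0 + lam 2 + lam 4) * k - lam 0 * lam 2 * lam 4 = 0) :=
  stmt_10_general G n k c a b lam m hn hconn hreg hdrg hspec pi hpi
end
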